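/- In the renewal setup, let 𝕊 be a finite set, let (ξ_k)_{k≥0} be an i.i.d. 𝕊-valued sequence with P[ξ₀ = i] = p_i, independent of (S(k))_{k≥1}, and let λ : 𝕊 → ℝ assign a constant λ_i to each mode; define r(t) = ξ_k for t ∈ [t_k, t_{k+1}). Let μ ≥ 1 be a constant with Σ_{i∈𝕊} p_i·λ_i + (ln μ)/θ < 0, and let α₁, α₂ be class-K∞ functions. Suppose that for almost every ω there is a continuous trajectory x(ω,·) : [0,∞) → ℝⁿ and functions V_i : ℝⁿ → ℝ such that: α₁(‖y‖) ≤ V_i(y) ≤ α₂(‖y‖) for all i ∈ 𝕊 and y ∈ ℝⁿ; V_i(y) ≤ μ·V_j(y) for all i, j ∈ 𝕊 and y ∈ ℝⁿ; and for each k the map t ↦ V_{ξ_k}(x(ω,t)) is continuous on [t_k, t_{k+1}], differentiable on (t_k, t_{k+1}), with derivative ≤ λ_{ξ_k}·V_{ξ_k}(x(ω,t)). Then P[ x(t) → 0 as t → ∞ ] = 1. -/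

import Mathlib

open Set Filter MeasureTheory ProbabilityTheory

/-- The renewal (arrival) times: `renewalTime S k ω = S 1 ω + ⋯ + S k ω`, with
`renewalTime S 0 ω = 0`. -/
noncomputable def renewalTime {Ω : Type*} (S : ℕ → Ω → ℝ) (k : ℕ) (ω : Ω) : ℝ :=
  ∑ j ∈ Finset.Icc 1 k, S j ω

/-- A function `α : [0,∞) → [0,∞)` is of class K∞ if it is continuous, strictly
increasing, vanishes at `0`, and tends to infinity. -/
def IsClassKInf (α : ℝ → ℝ) : Prop :=
  ContinuousOn α (Set.Ici 0) ∧ StrictMonoOn α (Set.Ici 0) ∧ α 0 = 0 ∧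
    (∀ s ≥ (0 : ℝ), 0 ≤ α s) ∧ Filter.Tendsto α Filter.atTop Filter.atTop

open Topology Finset

/-!
On a dwell interval the Lyapunov function of the active mode grows at most like `exp (λᵢ t)`
(Grönwall), and a switch multiplies it by at most `μ`. Hence at the `k`-th renewal time
`V ≤ V₀ · exp (k log μ + ∑_{j<k} λ_{ξ_j} S_{j+1})`, and on the following dwell interval at most
an extra factor `exp (L S_{k+1})` appears, where `L ≥ λᵢ` for all `i`. The products
`λ_{ξ_j} S_{j+1}` are i.i.d. with mean `θ ∑ pᵢ λᵢ`, so by the strong law of large numbers the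
exponent divided by `k` tends to `log μ + θ ∑ pᵢ λᵢ < 0` (the term `L S_{k+1} / k` tends to `0`),
while `t_k / k → θ > 0`. So the exponent tends to `-∞`, and the lower bound `α₁ ‖x‖ ≤ V` forces
`x → 0`.
-/

theorem le_mul_exp_of_deriv_le_mul {f : ℝ → ℝ} {a b c : ℝ}
    (hf : ContinuousOn f (Icc a b)) (hf' : DifferentiableOn ℝ f (Ioo a b))
    (hderiv : ∀ s ∈ Ioo a b, deriv f s ≤ c * f s) :
    ∀ s ∈ Icc a b, f s ≤ f a * Real.exp (c * (s - a)) := by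
  set g : ℝ → ℝ := fun u => f u * Real.exp (-(c * (u - a)))
  have hexp : ∀ u, HasDerivAt (fun u => Real.exp (-(c * (u - a))))
      (Real.exp (-(c * (u - a))) * -c) u :=
    fun u => by simpa using (((hasDerivAt_id u).sub_const a).const_mul c).neg.exp
  have hg_anti : AntitoneOn g (Icc a b) := by
    refine antitoneOn_of_deriv_nonpos (convex_Icc a b)
      (hf.mul (by fun_prop)) (fun u hu => ?_) (fun u hu => ?_) <;> rw [interior_Icc] at hu
    · exact ((hf'.differentiableAt (Ioo_mem_nhds hu.1 hu.2)).mul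
        (hexp u).differentiableAt).differentiableWithinAt
    · have hg' : HasDerivAt g (deriv f u * Real.exp (-(c * (u - a)))
          + f u * (Real.exp (-(c * (u - a))) * -c)) u :=
        (hf'.differentiableAt (Ioo_mem_nhds hu.1 hu.2)).hasDerivAt.mul (hexp u)
      rw [hg'.deriv]
      nlinarith [mul_le_mul_of_nonneg_right (hderiv u hu) (Real.exp_pos (-(c * (u - a)))).le]
  intro s hs
  have hgs : g s ≤ g a := hg_anti (left_mem_Icc.2 (hs.1.trans hs.2)) hs hs.1
  simp only [g, sub_self, mul_zero, neg_zero, Real.exp_zero, mul_one] at hgs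
  rwa [Real.exp_neg, ← div_eq_mul_inv, div_le_iff₀ (Real.exp_pos _)] at hgs

theorem le_mul_exp_sum_of_le_exp_mul {u d : ℕ → ℝ} (h : ∀ k, u (k + 1) ≤ Real.exp (d k) * u k)
    (k : ℕ) : u k ≤ u 0 * Real.exp (∑ j ∈ range k, d j) := by
  induction k with
  | zero => simp
  | succ k ih =>
    calc u (k + 1) ≤ Real.exp (d k) * (u 0 * Real.exp (∑ j ∈ range k, d j)) :=
          (h k).trans (mul_le_mul_of_nonneg_left ih (Real.exp_pos _).le)
      _ = u 0 * Real.exp (∑ j ∈ range (k + 1), d j) := by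
          rw [sum_range_succ, Real.exp_add]; ring

theorem tendsto_div_natCast_of_tendsto_sum_div {a : ℕ → ℝ} {c : ℝ}
    (h : Tendsto (fun n : ℕ => (∑ j ∈ range n, a j) / n) atTop (𝓝 c)) :
    Tendsto (fun n : ℕ => a n / n) atTop (𝓝 0) := by
  have hsucc : Tendsto (fun n : ℕ => (∑ j ∈ range (n + 1), a j) / (n + 1 : ℕ) * (1 + 1 / n))
      atTop (𝓝 (c * (1 + 0))) :=
    (h.comp (tendsto_add_atTop_nat 1)).mul (tendsto_one_div_atTop_nhds_zero_nat.const_add 1)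
  rw [add_zero, mul_one] at hsucc
  refine (hsucc.sub h).congr' ?_ |>.trans (by rw [sub_self])
  filter_upwards [eventually_ge_atTop 1] with n hn
  have : (n : ℝ) ≠ 0 := by positivity
  simp only [sum_range_succ]
  push_cast
  field_simp
  ring

theorem exists_mem_Ico_of_tendsto_atTop {t : ℕ → ℝ} (ht : Tendsto t atTop atTop) {s : ℝ}
    (hs : t 0 ≤ s) : ∃ k, s ∈ Ico (t k) (t (k + 1)) := by
  classical
  have hex : ∃ m, s < t m := (ht.eventually_gt_atTop s).exists
  obtain ⟨k, hk⟩ : ∃ k, Nat.find hex = k + 1 :=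
    Nat.exists_eq_succ_of_ne_zero fun h0 => by simpa [h0] using (Nat.find_spec hex).trans_le' hs
  exact ⟨k, not_lt.1 (Nat.find_min hex (hk ▸ k.lt_succ_self)), hk ▸ Nat.find_spec hex⟩

theorem tendsto_nhds_zero_of_le_on_Ico {t : ℕ → ℝ} (ht_mono : Monotone t)
    (ht : Tendsto t atTop atTop) {f : ℝ → ℝ} {b : ℕ → ℝ} (hf : ∀ s, 0 ≤ f s)
    (hfb : ∀ k, ∀ s ∈ Ico (t k) (t (k + 1)), f s ≤ b k) (hb : Tendsto b atTop (𝓝 0)) :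
    Tendsto f atTop (𝓝 0) := by
  refine tendsto_order.2
    ⟨fun a ha => Eventually.of_forall fun s => ha.trans_le (hf s), fun ε hε => ?_⟩
  obtain ⟨K, hK⟩ := eventually_atTop.1 (hb.eventually (gt_mem_nhds hε))
  filter_upwards [eventually_ge_atTop (t K), eventually_ge_atTop (t 0)] with s hsK hs0
  obtain ⟨k, hk⟩ := exists_mem_Ico_of_tendsto_atTop ht hs0
  have hKk : K ≤ k := Nat.lt_succ_iff.1 (ht_mono.reflect_lt (hsK.trans_lt hk.2))
  exact (hfb k s hk).trans_lt (hK k hKk)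

theorem tendsto_atTop_of_tendsto_div_natCast {T : ℕ → ℝ} {c : ℝ} (hc : 0 < c)
    (h : Tendsto (fun n : ℕ => T n / n) atTop (𝓝 c)) : Tendsto T atTop atTop :=
  (h.pos_mul_atTop hc tendsto_natCast_atTop_atTop).congr' <| by
    filter_upwards [eventually_ne_atTop 0] with n hn
    field_simp

theorem tendsto_drift_sum_atBot {a τ : ℕ → ℝ} {m θ c L : ℝ}
    (ha : Tendsto (fun n : ℕ => (∑ j ∈ range n, a j) / n) atTop (𝓝 m))
    (hτ : Tendsto (fun n : ℕ => (∑ j ∈ range n, τ j) / n) atTop (𝓝 θ)) (hdrift : c + m < 0) :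
    Tendsto (fun k => ∑ j ∈ range k, (c + a j) + L * τ k) atTop atBot := by
  have havg : Tendsto (fun n : ℕ => c + (∑ j ∈ range n, a j) / n + L * (τ n / n)) atTop
      (𝓝 (c + m + L * 0)) :=
    (ha.const_add c).add ((tendsto_div_natCast_of_tendsto_sum_div hτ).const_mul L)
  rw [mul_zero, add_zero] at havg
  refine (havg.neg_mul_atTop hdrift tendsto_natCast_atTop_atTop).congr' ?_
  filter_upwards [eventually_ne_atTop 0] with n hn
  rw [sum_add_distrib, sum_const, card_range, nsmul_eq_mul]
  field_simp

theorem tendsto_nhds_zero_of_tendsto_comp_strictMonoOn {ι : Type*} {l : Filter ι} {α : ℝ → ℝ}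
    (hα : StrictMonoOn α (Ici 0)) (hα0 : α 0 = 0) {u : ι → ℝ} (hu : ∀ i, 0 ≤ u i)
    (h : Tendsto (fun i => α (u i)) l (𝓝 0)) : Tendsto u l (𝓝 0) := by
  refine tendsto_order.2
    ⟨fun a ha => Eventually.of_forall fun i => ha.trans_le (hu i), fun ε hε => ?_⟩
  have hαε : 0 < α ε := hα0 ▸ hα self_mem_Ici hε.le hε
  filter_upwards [h.eventually (gt_mem_nhds hαε)] with i hi
  exact (hα.lt_iff_lt (hu i) hε.le).1 hi

theorem tendsto_zero_of_switched_lyapunov {E 𝕊 : Type*} [NormedAddCommGroup E] {t τ : ℕ → ℝ}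
    {σ : ℕ → 𝕊} {lam : 𝕊 → ℝ} {x : ℝ → E} {V : 𝕊 → E → ℝ} {α : ℝ → ℝ} {μ L : ℝ}
    (hτ : ∀ k, 0 ≤ τ k) (ht : ∀ k, t (k + 1) = t k + τ k) (ht_top : Tendsto t atTop atTop)
    (hα : StrictMonoOn α (Ici 0)) (hα0 : α 0 = 0) (hαV : ∀ i y, α ‖y‖ ≤ V i y)
    (hμ : 0 < μ) (hjump : ∀ i j y, V i y ≤ μ * V j y) (hL : 0 ≤ L) (hlamL : ∀ i, lam i ≤ L)
    (hflow : ∀ k, ∀ s ∈ Icc (t k) (t (k + 1)),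
      V (σ k) (x s) ≤ V (σ k) (x (t k)) * Real.exp (lam (σ k) * (s - t k)))
    (hexp : Tendsto (fun k => ∑ j ∈ range k, (Real.log μ + lam (σ j) * τ j) + L * τ k)
      atTop atBot) :
    Tendsto x atTop (𝓝 0) := by
  have hαnonneg : ∀ y : E, 0 ≤ α ‖y‖ := fun y =>
    hα0 ▸ hα.monotoneOn self_mem_Ici (norm_nonneg y) (norm_nonneg y)
  have hjump_exp : ∀ k, V (σ (k + 1)) (x (t (k + 1)))
      ≤ Real.exp (Real.log μ + lam (σ k) * τ k) * V (σ k) (x (t k)) := fun k =>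
    calc V (σ (k + 1)) (x (t (k + 1))) ≤ μ * V (σ k) (x (t (k + 1))) := hjump _ _ _
      _ ≤ μ * (V (σ k) (x (t k)) * Real.exp (lam (σ k) * τ k)) := by
        gcongr
        simpa [ht] using hflow k (t (k + 1)) ⟨by linarith [ht k, hτ k], le_rfl⟩
      _ = _ := by rw [Real.exp_add, Real.exp_log hμ]; ring
  have hbound : ∀ k, ∀ s ∈ Ico (t k) (t (k + 1)), α ‖x s‖ ≤ V (σ 0) (x (t 0)) *
      Real.exp (∑ j ∈ range k, (Real.log μ + lam (σ j) * τ j) + L * τ k) := fun k s hs =>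
    calc α ‖x s‖ ≤ V (σ k) (x s) := hαV _ _
      _ ≤ V (σ k) (x (t k)) * Real.exp (lam (σ k) * (s - t k)) := hflow k s (Ico_subset_Icc_self hs)
      _ ≤ V (σ k) (x (t k)) * Real.exp (L * τ k) := by
        have hs0 : 0 ≤ s - t k := by linarith [hs.1]
        have hsk : s - t k ≤ τ k := by linarith [ht k, hs.2]
        gcongr
        · exact (hαnonneg _).trans (hαV _ _)
        · exact hlamL _
      _ ≤ V (σ 0) (x (t 0)) * Real.exp (∑ j ∈ range k, (Real.log μ + lam (σ j) * τ j)) *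
          Real.exp (L * τ k) := by
        gcongr
        exact le_mul_exp_sum_of_le_exp_mul (u := fun k => V (σ k) (x (t k))) hjump_exp k
      _ = _ := by rw [Real.exp_add, mul_assoc]
  have hdecay := (Real.tendsto_exp_atBot.comp hexp).const_mul (V (σ 0) (x (t 0)))
  rw [mul_zero] at hdecay
  have ht_mono : Monotone t := monotone_nat_of_le_succ fun k => by linarith [ht k, hτ k]
  refine tendsto_zero_iff_norm_tendsto_zero.2 (tendsto_nhds_zero_of_tendsto_comp_strictMonoOn hα hα0
    (fun s => norm_nonneg _) ?_)
  exact tendsto_nhds_zero_of_le_on_Ico ht_mono ht_top (fun s => hαnonneg _) hbound hdecay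

section Independence

variable {Ω : Type*} [MeasurableSpace Ω] {P : Measure Ω}
  {β γ : Type*} [MeasurableSpace β] [MeasurableSpace γ]

theorem indepFun_prodMk_prodMk_of_indepFun_seq [IsZeroOrProbabilityMeasure P]
    {ι κ : Type*} {X : ι → Ω → β} {Y : κ → Ω → γ} (hX : ∀ i, Measurable (X i))
    (hY : ∀ k, Measurable (Y k)) (hXY : IndepFun (fun ω i => X i ω) (fun ω k => Y k ω) P)
    {i j : ι} {k l : κ} (hXij : IndepFun (X i) (X j) P) (hYkl : IndepFun (Y k) (Y l) P) :
    IndepFun (fun ω => (X i ω, Y k ω)) (fun ω => (X j ω, Y l ω)) P := by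
  have hgen : ∀ (i : ι) (k : κ), MeasurableSpace.comap (fun ω => (X i ω, Y k ω)) inferInstance
      = MeasurableSpace.generateFrom (preimage (fun ω => (X i ω, Y k ω)) ''
        image2 (· ×ˢ ·) {A : Set β | MeasurableSet A} {B : Set γ | MeasurableSet B}) := by
    intro i k
    rw [← MeasurableSpace.comap_generateFrom, generateFrom_prod]
  rw [IndepFun_iff_Indep, hgen, hgen]
  refine IndepSets.indep' ?_ ?_ (isPiSystem_prod.comap _) (isPiSystem_prod.comap _) ?_
  · rintro _ ⟨_, ⟨A, hA, B, hB, rfl⟩, rfl⟩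
    exact ((hX i).prodMk (hY k)) (hA.prod hB)
  · rintro _ ⟨_, ⟨A, hA, B, hB, rfl⟩, rfl⟩
    exact ((hX j).prodMk (hY l)) (hA.prod hB)
  rw [IndepSets_iff]
  rintro _ _ ⟨_, ⟨A, (hA : MeasurableSet A), B, (hB : MeasurableSet B), rfl⟩, rfl⟩
    ⟨_, ⟨C, (hC : MeasurableSet C), D, (hD : MeasurableSet D), rfl⟩, rfl⟩
  have hfactor : ∀ {i : ι} {k : κ} {A : Set β} {B : Set γ}, MeasurableSet A → MeasurableSet B →
      P ((fun ω => (X i ω, Y k ω)) ⁻¹' (A ×ˢ B)) = P (X i ⁻¹' A) * P (Y k ⁻¹' B) :=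
    fun {i k _ _} hA' hB' => hXY.measure_inter_preimage_eq_mul _ _
      (measurable_pi_apply i hA') (measurable_pi_apply k hB')
  calc P ((fun ω => (X i ω, Y k ω)) ⁻¹' (A ×ˢ B) ∩ (fun ω => (X j ω, Y l ω)) ⁻¹' (C ×ˢ D))
      = P ((fun ω i => X i ω) ⁻¹' {v | v i ∈ A ∧ v j ∈ C}
          ∩ (fun ω k => Y k ω) ⁻¹' {w | w k ∈ B ∧ w l ∈ D}) := by
        congr 1; ext ω; exact and_and_and_comm
    _ = P (X i ⁻¹' A ∩ X j ⁻¹' C) * P (Y k ⁻¹' B ∩ Y l ⁻¹' D) :=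
        hXY.measure_inter_preimage_eq_mul _ _ ((measurable_pi_apply i hA).inter
          (measurable_pi_apply j hC)) ((measurable_pi_apply k hB).inter (measurable_pi_apply l hD))
    _ = _ := by
        rw [hXij.measure_inter_preimage_eq_mul _ _ hA hC,
          hYkl.measure_inter_preimage_eq_mul _ _ hB hD, hfactor hA hB, hfactor hC hD]
        ring

theorem ProbabilityTheory.IdentDistrib.prodMk_of_indepFun {Ω' : Type*} [MeasurableSpace Ω']
    {P' : Measure Ω'} [IsFiniteMeasure P] [IsFiniteMeasure P'] {f : Ω → β} {f' : Ω → γ}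
    {g : Ω' → β} {g' : Ω' → γ}
    (hf : IdentDistrib f g P P') (hf' : IdentDistrib f' g' P P')
    (hff' : IndepFun f f' P) (hgg' : IndepFun g g' P') :
    IdentDistrib (fun ω => (f ω, f' ω)) (fun ω => (g ω, g' ω)) P P' where
  aemeasurable_fst := hf.aemeasurable_fst.prodMk hf'.aemeasurable_fst
  aemeasurable_snd := hf.aemeasurable_snd.prodMk hf'.aemeasurable_snd
  map_eq := by
    rw [hff'.map_prod_eq_prod_map_map hf.aemeasurable_fst hf'.aemeasurable_fst,
      hgg'.map_prod_eq_prod_map_map hf.aemeasurable_snd hf'.aemeasurable_snd, hf.map_eq, hf'.map_eq]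

end Independence

theorem integral_comp_eq_sum_measureReal {Ω 𝕊 : Type*} [MeasurableSpace Ω] {P : Measure Ω}
    [IsFiniteMeasure P] [Fintype 𝕊] [MeasurableSpace 𝕊] [MeasurableSingletonClass 𝕊]
    {ξ : Ω → 𝕊} (hξ : Measurable ξ) (f : 𝕊 → ℝ) :
    ∫ ω, f (ξ ω) ∂P = ∑ i, P.real (ξ ⁻¹' {i}) * f i := by
  rw [← integral_map hξ.aemeasurable (measurable_of_countable f).aestronglyMeasurable,
    integral_fintype Integrable.of_finite]
  simp [map_measureReal_apply hξ (measurableSet_singleton _)]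

theorem strong_law_mode_mul_dwell {Ω 𝕊 : Type*} [MeasurableSpace Ω] {P : Measure Ω}
    [IsProbabilityMeasure P] [Fintype 𝕊] [MeasurableSpace 𝕊] [MeasurableSingletonClass 𝕊]
    {S : ℕ → Ω → ℝ} (hSmeas : ∀ k, Measurable (S k)) (hSindep : iIndepFun S P)
    (hSident : ∀ k ≥ 1, IdentDistrib (S k) (S 1) P P) (hSint : Integrable (S 1) P)
    {ξ : ℕ → Ω → 𝕊} (hξmeas : ∀ k, Measurable (ξ k)) (hξindep : iIndepFun ξ P)
    (hξident : ∀ k, IdentDistrib (ξ k) (ξ 0) P P)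
    (hξS : IndepFun (fun ω k => ξ k ω) (fun ω k => S k ω) P) (lam : 𝕊 → ℝ) :
    ∀ᵐ ω ∂P, Tendsto (fun n : ℕ => (∑ j ∈ range n, lam (ξ j ω) * S (j + 1) ω) / n) atTop
      (𝓝 ((∫ ω, lam (ξ 0 ω) ∂P) * ∫ ω, S 1 ω ∂P)) := by
  have hlam : Measurable (fun q : 𝕊 × ℝ => lam q.1 * q.2) :=
    ((measurable_of_countable lam).comp measurable_fst).mul measurable_snd
  have hpair_indep : ∀ k, IndepFun (ξ k) (S (k + 1)) P := fun k =>
    hξS.comp (measurable_pi_apply k) (measurable_pi_apply (k + 1))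
  have hint : Integrable (fun ω => lam (ξ 0 ω) * S 1 ω) P := by
    obtain ⟨L, hL⟩ := Finite.exists_le fun i => ‖lam i‖
    refine (hSint.norm.const_mul L).mono'
      (hlam.comp ((hξmeas 0).prodMk (hSmeas 1))).aestronglyMeasurable
      (Eventually.of_forall fun ω => ?_)
    rw [norm_mul]
    exact mul_le_mul_of_nonneg_right (hL _) (norm_nonneg _)
  have hlln := strong_law_ae_real (fun j ω => lam (ξ j ω) * S (j + 1) ω) hint
    (fun i j hij => (indepFun_prodMk_prodMk_of_indepFun_seq hξmeas hSmeas hξS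
      (hξindep.indepFun hij) (hSindep.indepFun (by simpa using hij))).comp hlam hlam)
    (fun k => ((hξident k).prodMk_of_indepFun (hSident (k + 1) (by omega)) (hpair_indep k)
      (hpair_indep 0)).comp hlam)
  have hmean : ∫ ω, lam (ξ 0 ω) * S 1 ω ∂P = (∫ ω, lam (ξ 0 ω) ∂P) * ∫ ω, S 1 ω ∂P :=
    (hpair_indep 0).integral_fun_comp_mul_comp (g := id) (hξmeas 0).aemeasurable
      (hSmeas 1).aemeasurable (measurable_of_countable lam).aestronglyMeasurable
      aestronglyMeasurable_id
  simp only [zero_add] at hlln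
  rwa [hmean] at hlln

theorem renewalTime_succ {Ω : Type*} (S : ℕ → Ω → ℝ) (k : ℕ) (ω : Ω) :
    renewalTime S (k + 1) ω = renewalTime S k ω + S (k + 1) ω :=
  sum_Icc_succ_top (Nat.le_add_left 1 k) _

theorem renewalTime_eq_sum_range {Ω : Type*} (S : ℕ → Ω → ℝ) (k : ℕ) (ω : Ω) :
    renewalTime S k ω = ∑ j ∈ range k, S (j + 1) ω := by
  induction k with
  | zero => simp [renewalTime]
  | succ k ih => rw [renewalTime_succ, ih, sum_range_succ]

theorem stmt_16_general {Ω : Type*} [MeasurableSpace Ω] (P : Measure Ω) [IsProbabilityMeasure P]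
    {𝕊 : Type*} [Fintype 𝕊] [MeasurableSpace 𝕊] [MeasurableSingletonClass 𝕊] (n : ℕ)
    -- the i.i.d. dwell times
    (S : ℕ → Ω → ℝ) (hSmeas : ∀ k, Measurable (S k))
    (hSindep : iIndepFun S P)
    (hSident : ∀ k ≥ 1, IdentDistrib (S k) (S 1) P P)
    (hSpos : ∀ᵐ ω ∂P, 0 < S 1 ω)
    (hSint : Integrable (S 1) P)
    (θ : ℝ) (hθpos : 0 < θ) (hθ : (∫ ω, S 1 ω ∂P) = θ)
    -- the i.i.d. modes, independent of the dwell times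
    (ξ : ℕ → Ω → 𝕊) (hξmeas : ∀ k, Measurable (ξ k))
    (hξindep : iIndepFun ξ P)
    (hξident : ∀ k, IdentDistrib (ξ k) (ξ 0) P P)
    (hξS : IndepFun (fun ω k => ξ k ω) (fun ω k => S k ω) P)
    (p : 𝕊 → ℝ) (hp : ∀ i, (P {ω | ξ 0 ω = i}).toReal = p i)
    -- the mode-dependent constant rates, the jump factor, and the drift condition
    (lam : 𝕊 → ℝ) (μ : ℝ) (hμ : 1 ≤ μ)
    (hdrift : (∑ i : 𝕊, p i * lam i) + Real.log μ / θ < 0)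
    -- class-K∞ sandwich functions
    (α₁ α₂ : ℝ → ℝ) (hα₁ : IsClassKInf α₁)
    -- pathwise trajectory and Lyapunov functions
    (x : Ω → ℝ → EuclideanSpace ℝ (Fin n))
    (V : Ω → 𝕊 → EuclideanSpace ℝ (Fin n) → ℝ)
    (hsandwich : ∀ᵐ ω ∂P, ∀ i, ∀ y : EuclideanSpace ℝ (Fin n),
      α₁ ‖y‖ ≤ V ω i y ∧ V ω i y ≤ α₂ ‖y‖)
    (hμbound : ∀ᵐ ω ∂P, ∀ i j, ∀ y : EuclideanSpace ℝ (Fin n), V ω i y ≤ μ * V ω j y)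
    -- Lyapunov condition: decay along each dwell interval
    (hV_cont : ∀ᵐ ω ∂P, ∀ k, ContinuousOn (fun s => V ω (ξ k ω) (x ω s))
      (Set.Icc (renewalTime S k ω) (renewalTime S (k + 1) ω)))
    (hV_diff : ∀ᵐ ω ∂P, ∀ k, DifferentiableOn ℝ (fun s => V ω (ξ k ω) (x ω s))
      (Set.Ioo (renewalTime S k ω) (renewalTime S (k + 1) ω)))
    (hV_deriv : ∀ᵐ ω ∂P, ∀ k,
      ∀ s ∈ Set.Ioo (renewalTime S k ω) (renewalTime S (k + 1) ω),
        deriv (fun s' => V ω (ξ k ω) (x ω s')) s ≤ lam (ξ k ω) * V ω (ξ k ω) (x ω s)) :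
    ∀ᵐ ω ∂P, Filter.Tendsto (fun s => x ω s) Filter.atTop (nhds 0) := by
  obtain ⟨L, hL0, hL⟩ : ∃ L, 0 ≤ L ∧ ∀ i, lam i ≤ L :=
    let ⟨L, hL⟩ := Finite.exists_le lam
    ⟨max L 0, le_max_right _ _, fun i => (hL i).trans (le_max_left _ _)⟩
  have hmode : ∫ ω, lam (ξ 0 ω) ∂P = ∑ i, p i * lam i := by
    rw [integral_comp_eq_sum_measureReal (hξmeas 0)]
    exact sum_congr rfl fun i _ => by rw [← hp i]; rfl
  have hdrift' : Real.log μ + (∑ i, p i * lam i) * θ < 0 := by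
    have := mul_neg_of_neg_of_pos hdrift hθpos
    rwa [add_mul, div_mul_cancel₀ _ hθpos.ne', add_comm] at this
  have hpos : ∀ᵐ ω ∂P, ∀ k, 0 < S (k + 1) ω := ae_all_iff.2 fun k =>
    (hSident (k + 1) (by omega)).symm.ae_mem_snd measurableSet_Ioi hSpos
  have hlln_S := strong_law_ae_real (fun j ω => S (j + 1) ω) hSint
    (fun i j hij => hSindep.indepFun (by simpa using hij)) (fun k => hSident (k + 1) (by omega))
  have hlln_Y :=
    strong_law_mode_mul_dwell hSmeas hSindep hSident hSint hξmeas hξindep hξident hξS lam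
  rw [hmode, hθ] at hlln_Y
  filter_upwards [hpos, hlln_S, hlln_Y, hsandwich, hμbound, hV_cont, hV_diff, hV_deriv]
    with ω hposω hlln_Sω hlln_Yω hsandω hμω hV_contω hV_diffω hV_derivω
  simp only [zero_add, hθ] at hlln_Sω
  refine tendsto_zero_of_switched_lyapunov (fun k => (hposω k).le) (renewalTime_succ S · ω)
    (tendsto_atTop_of_tendsto_div_natCast hθpos ?_) hα₁.2.1 hα₁.2.2.1 (fun i y => (hsandω i y).1)
    (by linarith) hμω hL0 hL
    (fun k => le_mul_exp_of_deriv_le_mul (hV_contω k) (hV_diffω k) (hV_derivω k))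
    (tendsto_drift_sum_atBot hlln_Yω hlln_Sω hdrift')
  simpa only [renewalTime_eq_sum_range] using hlln_Sω

/-- Time-invariant special case: a randomly switched time-invariant system with multiple
Lyapunov functions `V_i`, constant decay/growth rates `λ_i`, common jump factor `μ`, and
renewal-process switching with i.i.d. modes, is almost surely attractive under the
average drift condition `Σ_i p_i λ_i + (ln μ)/θ < 0`. -/
theorem stmt_16 {Ω : Type*} [MeasurableSpace Ω] (P : Measure Ω) [IsProbabilityMeasure P]
    {𝕊 : Type*} [Fintype 𝕊] [MeasurableSpace 𝕊] [MeasurableSingletonClass 𝕊] (n : ℕ)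
    -- the i.i.d. dwell times
    (S : ℕ → Ω → ℝ) (hSmeas : ∀ k, Measurable (S k))
    (hSindep : iIndepFun S P)
    (hSident : ∀ k ≥ 1, IdentDistrib (S k) (S 1) P P)
    (hSpos : ∀ᵐ ω ∂P, 0 < S 1 ω)
    (hSint : Integrable (S 1) P)
    (θ : ℝ) (hθpos : 0 < θ) (hθ : (∫ ω, S 1 ω ∂P) = θ)
    -- the i.i.d. modes, independent of the dwell times
    (ξ : ℕ → Ω → 𝕊) (hξmeas : ∀ k, Measurable (ξ k))
    (hξindep : iIndepFun ξ P)
    (hξident : ∀ k, IdentDistrib (ξ k) (ξ 0) P P)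
    (hξS : IndepFun (fun ω k => ξ k ω) (fun ω k => S k ω) P)
    (p : 𝕊 → ℝ) (hp : ∀ i, (P {ω | ξ 0 ω = i}).toReal = p i)
    -- the mode-dependent constant rates, the jump factor, and the drift condition
    (lam : 𝕊 → ℝ) (μ : ℝ) (hμ : 1 ≤ μ)
    (hdrift : (∑ i : 𝕊, p i * lam i) + Real.log μ / θ < 0)
    -- class-K∞ sandwich functions
    (α₁ α₂ : ℝ → ℝ) (hα₁ : IsClassKInf α₁) (hα₂ : IsClassKInf α₂)
    -- pathwise trajectory and Lyapunov functions
    (x : Ω → ℝ → EuclideanSpace ℝ (Fin n))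
    (V : Ω → 𝕊 → EuclideanSpace ℝ (Fin n) → ℝ)
    (hx_cont : ∀ᵐ ω ∂P, ContinuousOn (x ω) (Set.Ici 0))
    (hsandwich : ∀ᵐ ω ∂P, ∀ i, ∀ y : EuclideanSpace ℝ (Fin n),
      α₁ ‖y‖ ≤ V ω i y ∧ V ω i y ≤ α₂ ‖y‖)
    (hμbound : ∀ᵐ ω ∂P, ∀ i j, ∀ y : EuclideanSpace ℝ (Fin n), V ω i y ≤ μ * V ω j y)
    -- Lyapunov condition: decay along each dwell interval
    (hV_cont : ∀ᵐ ω ∂P, ∀ k, ContinuousOn (fun s => V ω (ξ k ω) (x ω s))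
      (Set.Icc (renewalTime S k ω) (renewalTime S (k + 1) ω)))
    (hV_diff : ∀ᵐ ω ∂P, ∀ k, DifferentiableOn ℝ (fun s => V ω (ξ k ω) (x ω s))
      (Set.Ioo (renewalTime S k ω) (renewalTime S (k + 1) ω)))
    (hV_deriv : ∀ᵐ ω ∂P, ∀ k,
      ∀ s ∈ Set.Ioo (renewalTime S k ω) (renewalTime S (k + 1) ω),
        deriv (fun s' => V ω (ξ k ω) (x ω s')) s ≤ lam (ξ k ω) * V ω (ξ k ω) (x ω s)) :
    ∀ᵐ ω ∂P, Filter.Tendsto (fun s => x ω s) Filter.atTop (nhds 0) :=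
  stmt_16_general P n S hSmeas hSindep hSident hSpos hSint θ hθpos hθ ξ hξmeas hξindep hξident hξS p
    hp lam μ hμ hdrift α₁ α₂ hα₁ x V hsandwich hμbound hV_cont hV_diff hV_deriv
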